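/- The function F_c is monotonically decreasing on (0, μ_s), and the supremum of F_c over μ_d ∈ (0, μ_s) equals the limit of F_c(μ_d) as μ_d → 0⁺, which equals (1−s)·α/(1+ε) + p₀/2. -/

import Mathlib

/-- The function `F_c(μ_d)` appearing in Lemma 4 of the paper:
`f_c` evaluated at the worst-case true intensities, with `α̃ = α/(1+ε)`. -/
noncomputable def Fc (α s p₀ ε μts μs μd : ℝ) : ℝ :=
  (μs ^ 2 * Real.exp μd *
      ((1 - s) * (1 - Real.exp (-(α / (1 + ε)) * μd)) + (p₀ / 2) * (1 - Real.exp (-μd)))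
    - μd ^ 2 * Real.exp μs *
      ((1 - s) * (1 - Real.exp (-α * μts)) + (p₀ / 2) * (1 - Real.exp (-μs))))
  / (μd * μs * (μs - μd))

/-!
With `G t := (1 - s) ∫ u in 1 - α̃..1, exp (u t) + (p₀ / 2) ∫ u in 0..1, exp (u t)` one has
`t G t = exp t ((1 - s)(1 - exp (-α̃ t)) + (p₀ / 2)(1 - exp (-t)))`, hence
`F_c x = (μ_s G x - x β) / (μ_s - x)`, where `β ≥ G μ_s` because `α̃ μ_s ≤ α μ̃_s`.
As an integral of exponentials `G` is convex, so `(μ_s G x - x G μ_s) / (μ_s - x)`, the value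
at `0` of the secant of `G` through `x` and `μ_s`, decreases in `x`; so does the correction
`x (β - G μ_s) / (μ_s - x)` subtracted from it. Continuity of `G` gives `F_c (0⁺) = G 0`, which
is the supremum of the decreasing function `F_c`.
-/

open Real Set Filter Topology intervalIntegral

noncomputable def integralExpMul (b t : ℝ) : ℝ := ∫ u in b..1, exp (u * t)

lemma integralExpMul_of_ne_zero (b : ℝ) {t : ℝ} (ht : t ≠ 0) :
    integralExpMul b t = (exp t - exp (b * t)) / t := by
  rw [integralExpMul, integral_comp_mul_right _ ht, integral_exp, one_mul, smul_eq_mul,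
    inv_mul_eq_div]

lemma integralExpMul_zero (b : ℝ) : integralExpMul b 0 = 1 - b := by
  simp [integralExpMul]

lemma convexOn_integralExpMul {b : ℝ} (hb : b ≤ 1) : ConvexOn ℝ univ (integralExpMul b) := by
  refine ⟨convex_univ, fun x _ y _ p q hp hq hpq => ?_⟩
  have hInt : ∀ c t, IntervalIntegrable (fun u => c * exp (u * t)) MeasureTheory.volume b 1 :=
    fun c t => (by fun_prop : Continuous fun u => c * exp (u * t)).intervalIntegrable _ _
  simp only [integralExpMul, smul_eq_mul, ← integral_const_mul]
  rw [← integral_add (hInt p x) (hInt q y)]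
  refine integral_mono_on hb (by simpa using hInt 1 (p * x + q * y))
    ((hInt p x).add (hInt q y)) fun u _ => ?_
  calc exp (u * (p * x + q * y)) = exp (p * (u * x) + q * (u * y)) := by ring_nf
    _ ≤ p * exp (u * x) + q * exp (u * y) := convexOn_exp.2 trivial trivial hp hq hpq

lemma ConvexOn.antitoneOn_secant_intercept {G : ℝ → ℝ} {z β : ℝ}
    (hG : ConvexOn ℝ (Iic z) G) (hz : 0 ≤ z) (hβ : G z ≤ β) :
    AntitoneOn (fun x => (z * G x - x * β) / (z - x)) (Iio z) := by
  intro x hx y hy hxy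
  have hyz : 0 < z - y := sub_pos.2 hy
  have hslope : (G x - G z) / (x - z) ≤ (G y - G z) / (y - z) :=
    hG.secant_mono self_mem_Iic (Iio_subset_Iic_self hx) (Iio_subset_Iic_self hy) hx.ne hy.ne hxy
  have hrec : 1 / (z - x) ≤ 1 / (z - y) := one_div_le_one_div_of_le hyz (by linarith)
  -- both the secant slope of `G` at `z` and `1 / (z - w)` increase in `w`
  have hform : ∀ w, w < z →
      (z * G w - w * β) / (z - w) =
        β - z * ((G w - G z) / (w - z)) + z * (G z - β) * (1 / (z - w)) := by
    intro w hw
    have h1 : z - w ≠ 0 := (sub_pos.2 hw).ne'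
    have h2 : w - z ≠ 0 := (sub_neg.2 hw).ne
    field_simp
    ring
  simp only [hform x hx, hform y hy]
  have := mul_le_mul_of_nonneg_left hslope hz
  have := mul_le_mul_of_nonpos_left hrec (mul_nonpos_of_nonneg_of_nonpos hz (sub_nonpos.2 hβ))
  linarith

lemma csSup_image_Ioo_eq_of_antitoneOn {f : ℝ → ℝ} {a c L : ℝ} (hac : a < c)
    (hf : AntitoneOn f (Ioo a c)) (hL : Tendsto f (𝓝[Ioo a c] a) (𝓝 L)) :
    sSup (f '' Ioo a c) = L := by
  have : (𝓝[Ioo a c] a).NeBot := mem_closure_iff_nhdsWithin_neBot.1 <| by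
    rw [closure_Ioo hac.ne]
    exact left_mem_Icc.2 hac.le
  refine IsLUB.csSup_eq ⟨?_, fun M hM => le_of_tendsto hL ?_⟩ ((nonempty_Ioo.2 hac).image f)
  · rintro _ ⟨x, hx, rfl⟩
    refine ge_of_tendsto hL ?_
    filter_upwards [self_mem_nhdsWithin, nhdsWithin_le_nhds (eventually_lt_nhds hx.1)]
      with y hy hyx
    exact hf hy hx hyx.le
  · filter_upwards [self_mem_nhdsWithin] with y hy
    exact hM (mem_image_of_mem f hy)

noncomputable def Gc (a s p₀ t : ℝ) : ℝ :=
  (1 - s) * integralExpMul (1 - a) t + p₀ / 2 * integralExpMul 0 t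

lemma convexOn_Gc {a s p₀ : ℝ} (ha : 0 ≤ a) (hs : s ≤ 1) (hp₀ : 0 ≤ p₀) :
    ConvexOn ℝ univ (Gc a s p₀) :=
  ((convexOn_integralExpMul (by linarith)).smul (sub_nonneg.2 hs)).add
    ((convexOn_integralExpMul zero_le_one).smul (by positivity))

lemma Gc_zero (a s p₀ : ℝ) : Gc a s p₀ 0 = (1 - s) * a + p₀ / 2 := by
  simp [Gc, integralExpMul_zero]

lemma mul_Gc (a s p₀ : ℝ) {t : ℝ} (ht : t ≠ 0) :
    t * Gc a s p₀ t = exp t * ((1 - s) * (1 - exp (-a * t)) + p₀ / 2 * (1 - exp (-t))) := by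
  have h₁ : exp t * exp (-a * t) = exp ((1 - a) * t) := by rw [← exp_add]; ring_nf
  have h₂ : exp t * exp (-t) = 1 := by rw [← exp_add, add_neg_cancel, exp_zero]
  rw [Gc, integralExpMul_of_ne_zero _ ht, integralExpMul_of_ne_zero _ ht, zero_mul, exp_zero,
    mul_add, mul_left_comm t, mul_div_cancel₀ _ ht, mul_left_comm t, mul_div_cancel₀ _ ht]
  linear_combination (1 - s) * h₁ + p₀ / 2 * h₂

lemma Fc_eq_div (α s p₀ ε μts : ℝ) {μs x : ℝ} (hx : x ≠ 0) (hμs : μs ≠ 0)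
    (hxμs : μs - x ≠ 0) :
    Fc α s p₀ ε μts μs x = (μs * Gc (α / (1 + ε)) s p₀ x -
      x * (exp μs * ((1 - s) * (1 - exp (-α * μts)) + p₀ / 2 * (1 - exp (-μs))) / μs)) /
      (μs - x) := by
  rw [Fc, mul_assoc (μs ^ 2), ← mul_Gc _ _ _ hx]
  field_simp

lemma Gc_le_div {α a s p₀ μts μs : ℝ} (hs : s ≤ 1) (hμs : 0 < μs)
    (hαμ : a * μs ≤ α * μts) :
    Gc a s p₀ μs ≤
      exp μs * ((1 - s) * (1 - exp (-α * μts)) + p₀ / 2 * (1 - exp (-μs))) / μs := by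
  rw [le_div_iff₀ hμs, mul_comm, mul_Gc _ _ _ hμs.ne']
  have hexp : exp (-α * μts) ≤ exp (-a * μs) := exp_le_exp.2 (by linarith)
  have := mul_le_mul_of_nonneg_left hexp (sub_nonneg.2 hs)
  gcongr exp μs * ?_
  linarith

theorem stmt18_general (α s p₀ ε μts μs : ℝ)
    (hα : 0 < α) (hs : s < 1 / 2) (hp : 0 < p₀)
    (hε : 0 < ε) (hμs : 0 < μs) (hμs' : μs ≤ (1 + ε) * μts) :
    AntitoneOn (fun μd => Fc α s p₀ ε μts μs μd) (Set.Ioo 0 μs) ∧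
    sSup ((fun μd => Fc α s p₀ ε μts μs μd) '' Set.Ioo 0 μs) = (1 - s) * α / (1 + ε) + p₀ / 2 ∧
    Filter.Tendsto (fun μd => Fc α s p₀ ε μts μs μd)
      (nhdsWithin 0 (Set.Ioo 0 μs)) (nhds ((1 - s) * α / (1 + ε) + p₀ / 2)) := by
  set G := Gc (α / (1 + ε)) s p₀
  set β := exp μs * ((1 - s) * (1 - exp (-α * μts)) + p₀ / 2 * (1 - exp (-μs))) / μs
  have hG : ConvexOn ℝ univ G := convexOn_Gc (by positivity) (by linarith) hp.le
  have hβ : G μs ≤ β := by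
    refine Gc_le_div (by linarith) hμs ?_
    rw [div_mul_eq_mul_div, div_le_iff₀ (by linarith), mul_assoc]
    exact mul_le_mul_of_nonneg_left (by linarith) hα.le
  have hFc : EqOn (fun μd => Fc α s p₀ ε μts μs μd)
      (fun x => (μs * G x - x * β) / (μs - x)) (Ioo 0 μs) := fun x hx =>
    Fc_eq_div α s p₀ ε μts hx.1.ne' hμs.ne' (sub_pos.2 hx.2).ne'
  have hanti : AntitoneOn (fun μd => Fc α s p₀ ε μts μs μd) (Ioo 0 μs) :=
    (((hG.subset (subset_univ _) (convex_Iic μs)).antitoneOn_secant_intercept hμs.le hβ).mono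
      Ioo_subset_Iio_self).congr hFc.symm
  have hGc : Continuous G := continuousOn_univ.1 (hG.continuousOn isOpen_univ)
  have htend : Tendsto (fun μd => Fc α s p₀ ε μts μs μd) (𝓝[Ioo 0 μs] 0)
      (𝓝 ((1 - s) * α / (1 + ε) + p₀ / 2)) := by
    have hcont : ContinuousAt (fun x => (μs * G x - x * β) / (μs - x)) 0 :=
      ContinuousAt.div (by fun_prop) (by fun_prop) (by simpa using hμs.ne')
    have hval : (μs * G 0 - 0 * β) / (μs - 0) = (1 - s) * α / (1 + ε) + p₀ / 2 := by
      rw [zero_mul, sub_zero, sub_zero, mul_div_cancel_left₀ _ hμs.ne', mul_div_assoc]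
      exact Gc_zero _ _ _
    exact hval ▸ (hcont.tendsto.mono_left nhdsWithin_le_nhds).congr'
      (eventuallyEq_nhdsWithin_of_eqOn hFc).symm
  exact ⟨hanti, csSup_image_Ioo_eq_of_antitoneOn hμs hanti htend, htend⟩

theorem stmt18 (α s p₀ ε μts μs : ℝ)
    (hα : 0 < α) (hα1 : α ≤ 1) (hs0 : 0 ≤ s) (hs : s < 1 / 2) (hp : 0 < p₀)
    (hε : 0 < ε) (hμts : 0 < μts) (hμs : 0 < μs) (hμs' : μs ≤ (1 + ε) * μts) :
    AntitoneOn (fun μd => Fc α s p₀ ε μts μs μd) (Set.Ioo 0 μs) ∧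
    sSup ((fun μd => Fc α s p₀ ε μts μs μd) '' Set.Ioo 0 μs) = (1 - s) * α / (1 + ε) + p₀ / 2 ∧
    Filter.Tendsto (fun μd => Fc α s p₀ ε μts μs μd)
      (nhdsWithin 0 (Set.Ioo 0 μs)) (nhds ((1 - s) * α / (1 + ε) + p₀ / 2)) :=
  stmt18_general α s p₀ ε μts μs hα hs hp hε hμs hμs'
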